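/- Let s ≥ 2 and let 1 ≤ k_1 ≤ k_2 ≤ ⋯ ≤ k_s < n and 1 < l_1 ≤ l_2 ≤ ⋯ ≤ l_s ≤ n satisfy k_i < l_i and l_i − k_i + 1 ≥ m for all i. Set J := J_{k_1 l_1} J_{k_2 l_2} ⋯ J_{k_s l_s} and J' := J_{k_2 l_2} ⋯ J_{k_s l_s}. Let f' = X_{1c_1}X_{2c_2}⋯X_{mc_m} be any diagonal monomial of Y_{k_1 l_1} and set c_0 = k_1 − 1. Then the colon ideal (J : f') is contained in the ideal generated by J' together with the variables X_{ib} with 1 ≤ i ≤ m and c_{i−1} < b < c_i. -/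

import Mathlib

/-!
A monomial `x^v` lies in `(J : f')` iff `x^v f'` is divisible by a product `a₁ ⋯ a_s`, where
`a_j` is a diagonal of `Y_{k_j l_j}`. Write the column sequences of the `a_j` as the columns of an
`m × s` tableau. Sorting every row keeps each column a diagonal of the right submatrix, since the
`t`-th smallest entry of a row is monotone in the entries; so the rows may be taken weakly
increasing. If no gap variable `X_{ib}`, `c_{i-1} < b < c_i`, divides `x^v`, then no entry of row
`i` lies strictly between `c_{i-1}` and `c_i`. Delete from row `i` the first entry `≥ c_i` (the last
entry if there is none): these positions `p_i` satisfy `p_1 = 0` and `p_{i+1} ≤ p_i`, so the `s - 1`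
remaining columns are diagonals of `Y_{k_2 l_2}, …, Y_{k_s l_s}`. Whenever `f'` is needed to cover
an entry `c_i`, the deleted entry is `c_i` itself, hence the product of the new diagonals divides
`x^v`.
-/

open MvPolynomial

/-- The exponent vector of the diagonal monomial with column sequence `c`
(rows `1,…,m`, row `i` contributing the variable `X (i, c i)`). -/
noncomputable def expVec (m : ℕ) (c : ℕ → ℕ) : (ℕ × ℕ) →₀ ℕ :=
  ∑ i ∈ Finset.Icc 1 m, Finsupp.single (i, c i) 1

/-- The diagonal monomial `X_{1 c₁} X_{2 c₂} ⋯ X_{m c_m}`. -/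
noncomputable def diagMon (K : Type*) [Field K] (m : ℕ) (c : ℕ → ℕ) :
    MvPolynomial (ℕ × ℕ) K :=
  ∏ i ∈ Finset.Icc 1 m, MvPolynomial.X (i, c i)

/-- `tauGt a b` : the monomial with exponent vector `a` is strictly larger than the one
with exponent vector `b` in the lexicographic monomial order τ induced by
`X 11 > X 12 > ⋯ > X 1n > X 21 > ⋯ > X mn` : at the most significant variable where
they differ (i.e. the lexicographically smallest index pair), `a` has the bigger exponent. -/
def tauGt (a b : (ℕ × ℕ) →₀ ℕ) : Prop :=
  ∃ p : ℕ × ℕ, b p < a p ∧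
    ∀ q : ℕ × ℕ, (q.1 < p.1 ∨ (q.1 = p.1 ∧ q.2 < p.2)) → a q = b q

/-- `c` is the column sequence of a diagonal monomial of the submatrix `Y_{kl}`
(columns `k` through `l`): strictly increasing on `1,…,m` with values in `[k,l]`. -/
def IsDiagSeq (m k l : ℕ) (c : ℕ → ℕ) : Prop :=
  (∀ i, 1 ≤ i → i < m → c i < c (i + 1)) ∧ k ≤ c 1 ∧ c m ≤ l

/-- The ideal `J_{kl}` of `K[X]` generated by all diagonal monomials of `Y_{kl}`. -/
noncomputable def Jkl (K : Type*) [Field K] (m k l : ℕ) : Ideal (MvPolynomial (ℕ × ℕ) K) :=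
  Ideal.span {g | ∃ c, IsDiagSeq m k l c ∧ g = diagMon K m c}

open Finset

lemma expVec_apply (m : ℕ) (c : ℕ → ℕ) (i b : ℕ) :
    expVec m c (i, b) = if i ∈ Icc 1 m ∧ c i = b then 1 else 0 := by
  simp only [expVec, Finsupp.finsetSum_apply, Finsupp.single_apply, Prod.mk.injEq, ite_and,
    Finset.sum_ite_eq']

lemma sum_expVec_apply {ι : Type*} (G : Finset ι) (m : ℕ) (F : ι → ℕ → ℕ) (i b : ℕ) :
    (∑ j ∈ G, expVec m (F j)) (i, b) = #{j ∈ G | i ∈ Icc 1 m ∧ F j i = b} := by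
  simp only [Finsupp.finsetSum_apply, expVec_apply, card_filter]

lemma diagMon_eq_monomial (K : Type*) [Field K] (m : ℕ) (c : ℕ → ℕ) :
    diagMon K m c = monomial (expVec m c) (1 : K) := by
  rw [expVec, monomial_sum_one]
  rfl

lemma prod_Jkl_eq_span (K : Type*) [Field K] (m : ℕ) {ι : Type*} [Fintype ι] (k l : ι → ℕ) :
    ∏ j, Jkl K m (k j) (l j) = Ideal.span ((fun d => monomial d (1 : K)) ''
      {d | ∃ a : ι → ℕ → ℕ, (∀ j, IsDiagSeq m (k j) (l j) (a j)) ∧ d = ∑ j, expVec m (a j)}) := by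
  simp only [Jkl]
  rw [Ideal.prod_span]
  congr 1
  ext g
  rw [Set.mem_fintype_prod]
  constructor
  · rintro ⟨g, hg, rfl⟩
    choose a ha hga using hg
    exact ⟨_, ⟨a, ha, rfl⟩, by simp only [monomial_sum_one, hga, diagMon_eq_monomial]⟩
  · rintro ⟨_, ⟨a, ha, rfl⟩, rfl⟩
    exact ⟨fun j => diagMon K m (a j), fun j => ⟨a j, ha j, rfl⟩,
      by simp only [monomial_sum_one, diagMon_eq_monomial]⟩

lemma span_gapVariables_eq (K : Type*) [Field K] (m : ℕ) (c : ℕ → ℕ) :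
    Ideal.span {P : MvPolynomial (ℕ × ℕ) K |
      ∃ i b : ℕ, 1 ≤ i ∧ i ≤ m ∧ c (i - 1) < b ∧ b < c i ∧ P = MvPolynomial.X (i, b)} =
      Ideal.span ((fun d => monomial d (1 : K)) '' {d | ∃ i b : ℕ, 1 ≤ i ∧ i ≤ m ∧
        c (i - 1) < b ∧ b < c i ∧ d = Finsupp.single (i, b) 1}) := by
  congr 1
  ext P
  simp only [Set.mem_ofPred_eq, Set.mem_image, X]
  aesop

lemma prod_Ico_eq_prod_fin {M : Type*} [CommMonoid M] (f : ℕ → M) (a s : ℕ) :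
    ∏ j ∈ Ico a (a + s), f j = ∏ j : Fin s, f (j + a) := by
  rw [prod_Ico_eq_prod_range, Fin.prod_univ_eq_prod_range (fun j => f (j + a)),
    Nat.add_sub_cancel_left]
  simp only [add_comm]

namespace Tuple

variable {α : Type*} [LinearOrder α] {N : ℕ}

lemma card_filter_comp_sort (u : Fin N → α) (P : α → Prop) [DecidablePred P] :
    #{t | P ((u ∘ sort u) t)} = #{j | P (u j)} := by
  simp only [card_filter]
  exact Equiv.sum_comp (sort u) fun j => if P (u j) then 1 else 0

lemma comp_sort_le_comp_sort {u w : Fin N → α} (h : ∀ j, u j ≤ w j) (t : Fin N) :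
    (u ∘ sort u) t ≤ (w ∘ sort w) t := by
  set v := (w ∘ sort w) t
  have hw : (t : ℕ) < #{j | (w ∘ sort w) j ≤ v} :=
    (lt_card_le_iff_apply_le_of_monotone (monotone_sort w)).2 le_rfl
  have hwu : #{j | (w ∘ sort w) j ≤ v} ≤ #{j | (u ∘ sort u) j ≤ v} := by
    rw [card_filter_comp_sort w (· ≤ v), card_filter_comp_sort u (· ≤ v)]
    exact card_le_card (monotone_filter_right _ fun j _ hj => (h j).trans hj)
  exact (lt_card_le_iff_apply_le_of_monotone (monotone_sort u)).1 (hw.trans_le hwu)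

lemma comp_sort_lt_comp_sort {u w : Fin N → α} (h : ∀ j, u j < w j) (t : Fin N) :
    (u ∘ sort u) t < (w ∘ sort w) t := by
  set v := (w ∘ sort w) t
  have hw : (t : ℕ) < #{j | (w ∘ sort w) j ≤ v} :=
    (lt_card_le_iff_apply_le_of_monotone (monotone_sort w)).2 le_rfl
  have hwu : #{j | (w ∘ sort w) j ≤ v} ≤ #{j | (u ∘ sort u) j < v} := by
    rw [card_filter_comp_sort w (· ≤ v), card_filter_comp_sort u (· < v)]
    exact card_le_card (monotone_filter_right _ fun j _ hj => (h j).trans_le hj)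
  exact (lt_card_lt_iff_apply_lt_of_monotone (monotone_sort u)).1 (hw.trans_le hwu)

lemma comp_sort_eq_of_monotone {u : Fin N → α} (hu : Monotone u) : u ∘ sort u = u := by
  rw [sort_eq_refl_iff_monotone.2 hu]
  rfl

end Tuple

lemma exists_rowMonotone_diagSeqs {m N : ℕ} {k l : Fin N → ℕ} (hk : Monotone k) (hl : Monotone l)
    {A : Fin N → ℕ → ℕ} (hA : ∀ j, IsDiagSeq m (k j) (l j) (A j)) :
    ∃ A' : Fin N → ℕ → ℕ, (∀ j, IsDiagSeq m (k j) (l j) (A' j)) ∧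
      (∀ i, Monotone fun j => A' j i) ∧ ∑ j, expVec m (A' j) = ∑ j, expVec m (A j) := by
  let row (i : ℕ) (j : Fin N) : ℕ := A j i
  refine ⟨fun j i => (row i ∘ Tuple.sort (row i)) j, fun j => ⟨?_, ?_, ?_⟩,
    fun i => Tuple.monotone_sort (row i), ?_⟩
  · exact fun i hi him => Tuple.comp_sort_lt_comp_sort (fun j => (hA j).1 i hi him) j
  · calc k j = (k ∘ Tuple.sort k) j := by rw [Tuple.comp_sort_eq_of_monotone hk]
      _ ≤ _ := Tuple.comp_sort_le_comp_sort (fun j => (hA j).2.1) j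
  · calc _ ≤ (l ∘ Tuple.sort l) j := Tuple.comp_sort_le_comp_sort (fun j => (hA j).2.2) j
      _ = l j := by rw [Tuple.comp_sort_eq_of_monotone hl]
  · ext ⟨i, b⟩
    rw [sum_expVec_apply, sum_expVec_apply]
    exact Tuple.card_filter_comp_sort (row i) (fun x => i ∈ Icc 1 m ∧ x = b)

lemma Fin.antitone_succAbove_left {n : ℕ} (t : Fin n) :
    Antitone fun p : Fin (n + 1) => p.succAbove t := by
  intro p p' h
  simp only [Fin.succAbove, Fin.le_def, Fin.lt_def] at *
  split_ifs <;> simp only [Fin.val_castSucc, Fin.val_succ] <;> omega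

-- Row `i` of the tableau with columns `A j` loses its entry in position `p i`.
def eraseRows {s : ℕ} (A : Fin (s + 1) → ℕ → ℕ) (p : ℕ → Fin (s + 1)) : Fin s → ℕ → ℕ :=
  fun t i => A ((p i).succAbove t) i

lemma isDiagSeq_eraseRows {m s : ℕ} {k l : Fin (s + 1) → ℕ} {A : Fin (s + 1) → ℕ → ℕ}
    (hA : ∀ j, IsDiagSeq m (k j) (l j) (A j)) (hrow : ∀ i, Monotone fun j => A j i)
    {p : ℕ → Fin (s + 1)} (hp1 : p 1 = 0) (hp : ∀ i, 1 ≤ i → i < m → p (i + 1) ≤ p i)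
    (t : Fin s) : IsDiagSeq m (k t.succ) (l t.succ) (eraseRows A p t) := by
  refine ⟨fun i hi him => ?_, ?_, ?_⟩
  · calc A ((p i).succAbove t) i < A ((p i).succAbove t) (i + 1) := (hA _).1 i hi him
      _ ≤ A ((p (i + 1)).succAbove t) (i + 1) :=
        hrow (i + 1) (Fin.antitone_succAbove_left t (hp i hi him))
  · simpa only [eraseRows, hp1, Fin.succAbove_zero] using (hA t.succ).2.1
  · calc A ((p m).succAbove t) m ≤ A t.succ m :=
        hrow m (Fin.antitone_succAbove_left t (Fin.zero_le (p m)))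
      _ ≤ l t.succ := (hA t.succ).2.2

lemma sum_expVec_eraseRows_apply {m s : ℕ} (A : Fin (s + 1) → ℕ → ℕ) (p : ℕ → Fin (s + 1))
    (i b : ℕ) :
    (∑ t, expVec m (eraseRows A p t)) (i, b) + (if i ∈ Icc 1 m ∧ A (p i) i = b then 1 else 0) =
      (∑ j, expVec m (A j)) (i, b) := by
  rw [sum_expVec_apply, sum_expVec_apply, card_filter, card_filter,
    Fin.sum_univ_succAbove _ (p i), add_comm]
  rfl

lemma le_of_sum_expVec_le_of_gap {m N : ℕ} {A : Fin N → ℕ → ℕ} {c : ℕ → ℕ} {e : (ℕ × ℕ) →₀ ℕ}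
    (hle : ∑ j, expVec m (A j) ≤ e + expVec m c)
    (hgap : ∀ i b, 1 ≤ i → i ≤ m → c (i - 1) < b → b < c i → e (i, b) = 0)
    {i : ℕ} (hi : i ∈ Icc 1 m) (j : Fin N) (h : c (i - 1) < A j i) : c i ≤ A j i := by
  by_contra! h'
  have hpos : 0 < (∑ j, expVec m (A j)) (i, A j i) := by
    rw [sum_expVec_apply]
    exact card_pos.2 ⟨j, by simp [hi]⟩
  have hbound := hle (i, A j i)
  rw [mem_Icc] at hi
  rw [Finsupp.add_apply, hgap i _ hi.1 hi.2 h h', expVec_apply, if_neg (by omega)] at hbound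
  omega

lemma sum_expVec_eraseRows_le {m s : ℕ} {A : Fin (s + 1) → ℕ → ℕ} {p : ℕ → Fin (s + 1)}
    {c : ℕ → ℕ} {e : (ℕ × ℕ) →₀ ℕ} (hle : ∑ j, expVec m (A j) ≤ e + expVec m c)
    (hp : ∀ i j, A j i = c i → A (p i) i = c i) :
    ∑ t, expVec m (eraseRows A p t) ≤ e := by
  refine Finsupp.le_def.2 fun ⟨i, b⟩ => ?_
  have hsum := sum_expVec_eraseRows_apply (m := m) A p i b
  have hbound := hle (i, b)
  rw [Finsupp.add_apply, expVec_apply] at hbound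
  by_cases hcb : i ∈ Icc 1 m ∧ c i = b
  · rw [if_pos hcb] at hbound
    by_cases hpb : A (p i) i = b
    · rw [if_pos ⟨hcb.1, hpb⟩] at hsum
      omega
    · have : (∑ j, expVec m (A j)) (i, b) = 0 := by
        rw [sum_expVec_apply]
        exact card_eq_zero.2 (filter_eq_empty_iff.2 fun j _ hj =>
          hpb ((hp i j (hj.2.trans hcb.2.symm)).trans hcb.2))
      omega
  · rw [if_neg hcb] at hbound
    omega

theorem exists_diagSeqs_sum_le_of_rowMonotone {m s : ℕ} (hm : 1 ≤ m) {k l : Fin (s + 1) → ℕ}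
    {A : Fin (s + 1) → ℕ → ℕ} (hA : ∀ j, IsDiagSeq m (k j) (l j) (A j))
    (hrow : ∀ i, Monotone fun j => A j i) {c : ℕ → ℕ} (hc0 : c 0 < k 0) {e : (ℕ × ℕ) →₀ ℕ}
    (hle : ∑ j, expVec m (A j) ≤ e + expVec m c)
    (hgap : ∀ i b, 1 ≤ i → i ≤ m → c (i - 1) < b → b < c i → e (i, b) = 0) :
    ∃ B : Fin s → ℕ → ℕ, (∀ t, IsDiagSeq m (k t.succ) (l t.succ) (B t)) ∧
      ∑ t, expVec m (B t) ≤ e := by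
  have hnotInGap {i : ℕ} (hi : i ∈ Icc 1 m) (j : Fin (s + 1)) (h : c (i - 1) < A j i) :
      c i ≤ A j i :=
    le_of_sum_expVec_le_of_gap hle hgap hi j h
  -- `p i` is the first position in the sorted row `i` whose entry is `≥ c i` (or the last one).
  let p (i : ℕ) : Fin (s + 1) := ⟨min #{j | A j i < c i} s, by omega⟩
  have hbelow (i : ℕ) (j : Fin (s + 1)) : (j : ℕ) < #{j | A j i < c i} ↔ A j i < c i :=
    Tuple.lt_card_lt_iff_apply_lt_of_monotone (hrow i)
  have hp1 : p 1 = 0 := by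
    have : #{j | A j 1 < c 1} = 0 := by
      refine card_eq_zero.2 (filter_eq_empty_iff.2 fun j _ => not_lt.2 (hnotInGap ?_ j ?_))
      · simp [hm]
      · exact hc0.trans_le ((hA 0).2.1.trans (hrow 1 (Fin.zero_le j)))
    ext
    simp [p, this]
  have hp_anti (i : ℕ) (hi : 1 ≤ i) (him : i < m) : p (i + 1) ≤ p i := by
    have : #{j | A j (i + 1) < c (i + 1)} ≤ #{j | A j i < c i} := by
      refine card_le_card (monotone_filter_right _ fun j _ hj => ?_)
      have : A j (i + 1) ≤ c i := by
        by_contra! h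
        exact hj.not_ge (hnotInGap (by simp only [mem_Icc]; omega) j (by simpa using h))
      exact ((hA j).1 i hi him).trans_le this
    simp only [p, Fin.le_def]
    omega
  have hp_eq (i : ℕ) (j : Fin (s + 1)) (hj : A j i = c i) : A (p i) i = c i := by
    have hqj : #{j | A j i < c i} ≤ j := not_lt.1 fun h => ((hbelow i j).1 h).ne hj
    have hpq : (p i : ℕ) = #{j | A j i < c i} := by simp only [p]; omega
    have hpj : p i ≤ j := by rw [Fin.le_def]; omega
    refine le_antisymm (hj ▸ hrow i hpj) (not_lt.1 fun hlt => ?_)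
    exact ((hbelow i (p i)).2 hlt).ne hpq
  exact ⟨eraseRows A p, isDiagSeq_eraseRows hA hrow hp1 hp_anti, sum_expVec_eraseRows_le hle hp_eq⟩

theorem exists_diagSeqs_sum_le {m s : ℕ} (hm : 1 ≤ m) {k l : Fin (s + 1) → ℕ} (hk : Monotone k)
    (hl : Monotone l) {A : Fin (s + 1) → ℕ → ℕ} (hA : ∀ j, IsDiagSeq m (k j) (l j) (A j))
    {c : ℕ → ℕ} (hc0 : c 0 < k 0) {e : (ℕ × ℕ) →₀ ℕ}
    (hle : ∑ j, expVec m (A j) ≤ e + expVec m c)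
    (hgap : ∀ i b, 1 ≤ i → i ≤ m → c (i - 1) < b → b < c i → e (i, b) = 0) :
    ∃ B : Fin s → ℕ → ℕ, (∀ t, IsDiagSeq m (k t.succ) (l t.succ) (B t)) ∧
      ∑ t, expVec m (B t) ≤ e := by
  obtain ⟨A', hA', hrow, hsum⟩ := exists_rowMonotone_diagSeqs hk hl hA
  exact exists_diagSeqs_sum_le_of_rowMonotone hm hA' hrow hc0 (hsum ▸ hle) hgap

theorem stmt_9_general (K : Type*) [Field K] (m s : ℕ) (hm : 1 ≤ m)
    (k l : ℕ → ℕ)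
    (hk1 : 1 ≤ k 1) (hkmono : ∀ j, 1 ≤ j → j < s → k j ≤ k (j + 1))
    (hlmono : ∀ j, 1 ≤ j → j < s → l j ≤ l (j + 1))
    (c : ℕ → ℕ) (hc0 : c 0 = k 1 - 1) :
    Submodule.colon (∏ j ∈ Finset.Icc 1 s, Jkl K m (k j) (l j))
        (Ideal.span {diagMon K m c}) ≤
      (∏ j ∈ Finset.Icc 2 s, Jkl K m (k j) (l j)) ⊔
        Ideal.span {P : MvPolynomial (ℕ × ℕ) K |
          ∃ i b : ℕ, 1 ≤ i ∧ i ≤ m ∧ c (i - 1) < b ∧ b < c i ∧ P = MvPolynomial.X (i, b)} := by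
  obtain _ | s := s
  · simp
  have hmono {f : ℕ → ℕ} (hf : ∀ j, 1 ≤ j → j < s + 1 → f j ≤ f (j + 1)) :
      Monotone fun j : Fin (s + 1) => f (j + 1) :=
    Fin.monotone_iff_le_succ.2 fun j => hf (j + 1) (by omega) (by simp)
  rw [show Icc 1 (s + 1) = Ico 1 (1 + (s + 1)) by ext; simp only [mem_Icc, mem_Ico]; omega,
    show Icc 2 (s + 1) = Ico 2 (2 + s) by ext; simp only [mem_Icc, mem_Ico]; omega,
    prod_Ico_eq_prod_fin, prod_Ico_eq_prod_fin, prod_Jkl_eq_span, prod_Jkl_eq_span,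
    span_gapVariables_eq, ← Ideal.span_union, ← Set.image_union]
  intro x hx
  rw [Ideal.mem_colon_span_singleton, diagMon_eq_monomial, mem_ideal_span_monomial_image] at hx
  refine mem_ideal_span_monomial_image.2 fun v hv => ?_
  obtain ⟨_, ⟨A, hA, rfl⟩, hAv⟩ := hx (v + expVec m c) (by simpa [coeff_mul_monomial] using hv)
  by_cases hgap : ∃ i b, 1 ≤ i ∧ i ≤ m ∧ c (i - 1) < b ∧ b < c i ∧ v (i, b) ≠ 0
  · obtain ⟨i, b, hi, him, hb, hb', hv⟩ := hgap
    exact ⟨_, Or.inr ⟨i, b, hi, him, hb, hb', rfl⟩, Finsupp.single_le_iff.2 (by omega)⟩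
  · push Not at hgap
    obtain ⟨B, hB, hBv⟩ := exists_diagSeqs_sum_le hm (hmono hkmono) (hmono hlmono) hA
      (by simp only [Fin.val_zero, zero_add]; omega) hAv hgap
    exact ⟨_, Or.inl ⟨B, hB, rfl⟩, hBv⟩

/-- Let `s ≥ 2`, `1 ≤ k₁ ≤ ⋯ ≤ k_s < n`, `1 < l₁ ≤ ⋯ ≤ l_s ≤ n` with
`k_i < l_i`, `l_i - k_i + 1 ≥ m`.  Set `J = J_{k₁l₁}⋯J_{k_sl_s}` and
`J' = J_{k₂l₂}⋯J_{k_sl_s}`.  For any diagonal monomial `f' = X_{1c₁}⋯X_{mc_m}` of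
`Y_{k₁l₁}` (with `c₀ = k₁ - 1`), the colon ideal `(J : f')` is contained in the ideal
generated by `J'` together with the variables `X_{ib}`, `1 ≤ i ≤ m`,
`c_{i-1} < b < c_i`. -/
theorem stmt_9 (K : Type*) [Field K] (m n s : ℕ) (hm : 1 ≤ m) (hmn : m ≤ n) (hs : 2 ≤ s)
    (k l : ℕ → ℕ)
    (hk1 : 1 ≤ k 1) (hkmono : ∀ j, 1 ≤ j → j < s → k j ≤ k (j + 1)) (hks : k s < n)
    (hl1 : 1 < l 1) (hlmono : ∀ j, 1 ≤ j → j < s → l j ≤ l (j + 1)) (hls : l s ≤ n)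
    (hkl : ∀ j, 1 ≤ j → j ≤ s → k j < l j)
    (hlen : ∀ j, 1 ≤ j → j ≤ s → m ≤ l j - k j + 1)
    (c : ℕ → ℕ) (hc : IsDiagSeq m (k 1) (l 1) c) (hc0 : c 0 = k 1 - 1) :
    Submodule.colon (∏ j ∈ Finset.Icc 1 s, Jkl K m (k j) (l j))
        (Ideal.span {diagMon K m c}) ≤
      (∏ j ∈ Finset.Icc 2 s, Jkl K m (k j) (l j)) ⊔
        Ideal.span {P : MvPolynomial (ℕ × ℕ) K |
          ∃ i b : ℕ, 1 ≤ i ∧ i ≤ m ∧ c (i - 1) < b ∧ b < c i ∧ P = MvPolynomial.X (i, b)} :=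
  stmt_9_general K m s hm k l hk1 hkmono hlmono c hc0
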